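/- For all λ > 0, μ > 0, s > 0 and x ≥ 0, the function g(t) = λ e^{-λx} e^{-μ(t−x)} I₀(2√(λμ x (t−x))) for t ≥ x (and 0 for t < x) satisfies ∫₀^∞ g(t) e^{-s t} dt = (λ/(s+μ)) e^{-x(s+λ)} e^{λμx/(s+μ)}. -/

import Mathlib

open MeasureTheory Real Filter Set

noncomputable def besselI0 (z : ℝ) : ℝ :=
  ∑' k : ℕ, (z / 2) ^ (2 * k) / ((Nat.factorial k : ℝ)) ^ 2

noncomputable def besselI1 (z : ℝ) : ℝ :=
  ∑' k : ℕ, (z / 2) ^ (2 * k + 1) / ((Nat.factorial k : ℝ) * (Nat.factorial (k + 1) : ℝ))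

lemma aux_integral (k : ℕ) {c : ℝ} (hc : 0 < c) :
    ∫ u in Ioi (0:ℝ), u ^ k * Real.exp (-(c * u)) = (Nat.factorial k : ℝ) / c ^ (k + 1) := by
  have heq : ∀ t ∈ Ioi (0:ℝ),
      t ^ ((k:ℝ) + 1 - 1) * Real.exp (-(c * t)) = t ^ k * Real.exp (-(c * t)) := by
    intro t ht
    rw [show ((k:ℝ) + 1 - 1) = (k:ℝ) by ring, Real.rpow_natCast]
  have h := Real.integral_rpow_mul_exp_neg_mul_Ioi (a := (k:ℝ) + 1) (r := c)
    (by positivity) hc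
  rw [← setIntegral_congr_fun measurableSet_Ioi heq, h, Real.Gamma_nat_eq_factorial,
    show ((k:ℝ) + 1) = ((k + 1 : ℕ) : ℝ) by push_cast; ring, Real.rpow_natCast,
    one_div, inv_pow, inv_mul_eq_div]

lemma aux_integrable (k : ℕ) {c : ℝ} (hc : 0 < c) :
    IntegrableOn (fun u : ℝ => u ^ k * Real.exp (-(c * u))) (Ioi 0) := by
  have h := integrableOn_rpow_mul_exp_neg_mul_rpow (p := 1) (s := (k:ℝ))
    (lt_of_lt_of_le neg_one_lt_zero (Nat.cast_nonneg k)) zero_lt_one hc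
  refine h.congr_fun (fun u hu => ?_) measurableSet_Ioi
  dsimp only
  rw [Real.rpow_one, Real.rpow_natCast, neg_mul]

lemma aux_main {a c K : ℝ} (ha : 0 ≤ a) (hc : 0 < c) (hK : 0 ≤ K) :
    ∫ u in Ioi (0:ℝ),
        ∑' k : ℕ, K * (a ^ k / ((Nat.factorial k : ℝ)) ^ 2) * (u ^ k * Real.exp (-(c * u)))
      = (K / c) * Real.exp (a / c) := by
  have hval : ∀ k : ℕ,
      K * (a ^ k / ((Nat.factorial k : ℝ)) ^ 2) * ((Nat.factorial k : ℝ) / c ^ (k + 1))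
        = (K / c) * ((a / c) ^ k / (Nat.factorial k : ℝ)) := by
    intro k
    have hk : (Nat.factorial k : ℝ) ≠ 0 := Nat.cast_ne_zero.2 (Nat.factorial_ne_zero k)
    rw [div_pow]
    field_simp
    ring
  have hsum : Summable (fun k : ℕ => (K / c) * ((a / c) ^ k / (Nat.factorial k : ℝ))) :=
    (Real.summable_pow_div_factorial (a / c)).mul_left _
  have hint : ∀ k : ℕ,
      IntegrableOn (fun u : ℝ => K * (a ^ k / ((Nat.factorial k : ℝ)) ^ 2)
        * (u ^ k * Real.exp (-(c * u)))) (Ioi 0) :=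
    fun k => (aux_integrable k hc).const_mul _
  have hI : ∀ k : ℕ,
      ∫ u in Ioi (0:ℝ), K * (a ^ k / ((Nat.factorial k : ℝ)) ^ 2)
          * (u ^ k * Real.exp (-(c * u)))
        = K * (a ^ k / ((Nat.factorial k : ℝ)) ^ 2) * ((Nat.factorial k : ℝ) / c ^ (k + 1)) := by
    intro k
    rw [MeasureTheory.integral_const_mul, aux_integral k hc]
  have hmeas : ∀ k : ℕ, AEStronglyMeasurable
      (fun u : ℝ => K * (a ^ k / ((Nat.factorial k : ℝ)) ^ 2)
        * (u ^ k * Real.exp (-(c * u)))) (volume.restrict (Ioi 0)) := by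
    intro k
    exact (Continuous.mul continuous_const ((continuous_pow k).mul
      (Real.continuous_exp.comp (continuous_const.mul continuous_id).neg))).aestronglyMeasurable
  have hlin : ∀ k : ℕ,
      (∫⁻ u in Ioi (0:ℝ), ‖K * (a ^ k / ((Nat.factorial k : ℝ)) ^ 2)
          * (u ^ k * Real.exp (-(c * u)))‖ₑ)
        = ENNReal.ofReal (K * (a ^ k / ((Nat.factorial k : ℝ)) ^ 2)
            * ((Nat.factorial k : ℝ) / c ^ (k + 1))) := by
    intro k
    rw [← hI k, ofReal_integral_eq_lintegral_ofReal (hint k) ?_]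
    · refine lintegral_congr_ae ?_
      filter_upwards [ae_restrict_mem measurableSet_Ioi] with u hu
      have hu' : (0:ℝ) < u := hu
      rw [Real.enorm_eq_ofReal (by positivity)]
    · filter_upwards [ae_restrict_mem measurableSet_Ioi] with u hu
      have hu' : (0:ℝ) < u := hu
      positivity
  rw [integral_tsum hmeas ?_]
  · rw [tsum_congr (fun k => (hI k).trans (hval k)), tsum_mul_left]
    congr 1
    rw [Real.exp_eq_exp_ℝ, NormedSpace.exp_eq_tsum_div]
  · rw [tsum_congr hlin, tsum_congr (fun k => congrArg ENNReal.ofReal (hval k)),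
      ← ENNReal.ofReal_tsum_of_nonneg (fun k => by positivity) hsum]
    exact ENNReal.ofReal_ne_top

theorem stmt_4 (lam mu s x : ℝ) (hlam : 0 < lam) (hmu : 0 < mu) (hs : 0 < s) (hx : 0 ≤ x) :
    ∫ t in Ioi (0:ℝ),
      (if x ≤ t then
        lam * Real.exp (-lam * x) * Real.exp (-mu * (t - x))
          * besselI0 (2 * Real.sqrt (lam * mu * x * (t - x)))
      else 0) * Real.exp (-s * t)
    = (lam / (s + mu)) * Real.exp (-x * (s + lam)) * Real.exp (lam * mu * x / (s + mu)) := by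
  set F : ℝ → ℝ := fun t =>
    (if x ≤ t then
        lam * Real.exp (-lam * x) * Real.exp (-mu * (t - x))
          * besselI0 (2 * Real.sqrt (lam * mu * x * (t - x)))
      else 0) * Real.exp (-s * t) with hF
  have hc : 0 < s + mu := by positivity
  have hK : 0 ≤ lam * Real.exp (-lam * x) * Real.exp (-s * x) := by positivity
  -- Step 1: restrict to Ioi x
  have h1 : ∫ t in Ioi (0:ℝ), F t = ∫ t in Ioi x, F t := by
    rw [show ∫ t in Ioi (0:ℝ), F t = ∫ t in Ioi (0:ℝ), (Ioi x).indicator F t from ?_,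
      setIntegral_indicator measurableSet_Ioi, Ioi_inter_Ioi, sup_eq_right.2 hx]
    refine setIntegral_congr_ae measurableSet_Ioi ?_
    filter_upwards [compl_mem_ae_iff.2 (volume_singleton (a := x))] with t ht _
    by_cases hxt : x < t
    · rw [indicator_of_mem (mem_Ioi.2 hxt)]
    · rw [indicator_of_notMem (by simpa using hxt), hF]
      have hne : ¬ x ≤ t := fun h => hxt (lt_of_le_of_ne h fun he => ht he.symm)
      simp [hne]
  -- Step 2: translate
  have h2 : ∫ t in Ioi x, F t = ∫ u in Ioi (0:ℝ), F (u + x) := by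
    rw [← integral_indicator measurableSet_Ioi, ← integral_indicator measurableSet_Ioi,
      ← integral_add_right_eq_self (fun u => (Ioi x).indicator F u) x]
    congr 1
    funext u
    by_cases hu : (0:ℝ) < u
    · rw [indicator_of_mem (mem_Ioi.2 ((lt_add_iff_pos_left x).2 hu)),
        indicator_of_mem (mem_Ioi.2 hu)]
    · rw [indicator_of_notMem (by simp [lt_add_iff_pos_left, hu]),
        indicator_of_notMem (by simpa using hu)]
  -- Step 3: pointwise series form
  have h3 : ∀ u ∈ Ioi (0:ℝ), F (u + x) =
      ∑' k : ℕ, (lam * Real.exp (-lam * x) * Real.exp (-s * x))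
        * ((lam * mu * x) ^ k / ((Nat.factorial k : ℝ)) ^ 2)
        * (u ^ k * Real.exp (-((s + mu) * u))) := by
    intro u hu
    have hu' : (0:ℝ) < u := hu
    have hb : besselI0 (2 * Real.sqrt (lam * mu * x * u))
        = ∑' k : ℕ, (lam * mu * x * u) ^ k / ((Nat.factorial k : ℝ)) ^ 2 := by
      rw [besselI0]
      refine tsum_congr fun k => ?_
      rw [mul_div_cancel_left₀ _ (two_ne_zero), pow_mul, Real.sq_sqrt (by positivity)]
    rw [hF]
    simp only
    rw [if_pos (le_add_of_nonneg_left hu'.le), add_sub_cancel_right, hb,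
      ← tsum_mul_left, ← tsum_mul_right]
    refine tsum_congr fun k => ?_
    rw [show Real.exp (-((s + mu) * u)) = Real.exp (-mu * u) * Real.exp (-(s * u)) by
        rw [← Real.exp_add]; congr 1; ring,
      show Real.exp (-s * (u + x)) = Real.exp (-(s * u)) * Real.exp (-s * x) by
        rw [← Real.exp_add]; congr 1; ring,
      mul_pow]
    ring
  rw [h1, h2, setIntegral_congr_fun measurableSet_Ioi h3,
    aux_main (by positivity) hc hK]
  rw [show -x * (s + lam) = -lam * x + -s * x by ring, Real.exp_add]
  ring
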